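/- Let s ∈ (0,1). The principal value integral PV ∫_{-∞}^{∞} (1+r)_+^{s-1} · r / |r|^{1+2s} dr equals 0, where (t)_+^{s-1} denotes |t|^{s-2} t when t > 0 and 0 otherwise. Equivalently, lim_{ε→0} [ -∫_0^{1-ε} t^{s-1} (1-t)^{-2s} dt + ∫_{1+ε}^{∞} t^{s-1} (t-1)^{-2s} dt ] = 0. -/

import Mathlib

open MeasureTheory Set Filter

/-!
The substitution `t ↦ 1/t` maps `(1 + ε, ∞)` onto `(0, 1/(1 + ε))` and turns
`t^(s-1) (t-1)^(-2s) dt` into `t^(s-1) (1-t)^(-2s) dt`. Hence the bracket equals the integral of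
`t^(s-1) (1-t)^(-2s)` over `[1 - ε, 1/(1 + ε))`, an interval of length `ε²/(1 + ε)` on which the
integrand is `O(ε^(-2s))`; so the bracket is `O(ε^(2-2s))`, which tends to `0` because `s < 1`.
-/

noncomputable def betaIntegrand (s t : ℝ) : ℝ := t ^ (s - 1) * (1 - t) ^ (-(2 * s))

lemma integrableOn_betaIntegrand_Ioo {s b : ℝ} (hs : 0 < s) (hb : b < 1) :
    IntegrableOn (betaIntegrand s) (Ioo 0 b) := by
  have hpow : IntegrableOn (fun t : ℝ => t ^ (s - 1)) (Ioo 0 b) := by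
    refine (intervalIntegral.intervalIntegrable_rpow' (a := 0) (b := b)
      (by linarith)).def'.mono_set ?_
    rintro t ⟨ht0, htb⟩
    exact Ioc_subset_uIoc ⟨ht0, htb.le⟩
  refine (hpow.const_mul ((1 - b) ^ (-(2 * s)))).mono' ?_ ?_
  · refine (ContinuousOn.mul ?_ ?_).aestronglyMeasurable measurableSet_Ioo
    · exact fun t ht => (Real.continuousAt_rpow_const t _ (Or.inl ht.1.ne')).continuousWithinAt
    · exact ContinuousOn.rpow_const (by fun_prop) fun t ht => Or.inl (by linarith [ht.2])
  · refine (ae_restrict_iff' measurableSet_Ioo).2 (ae_of_all _ fun t ⟨ht0, htb⟩ => ?_)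
    have h1t : 0 < 1 - t := by linarith
    rw [betaIntegrand, Real.norm_of_nonneg (by positivity), mul_comm]
    exact mul_le_mul_of_nonneg_right
      (Real.rpow_le_rpow_of_nonpos (by linarith) (by linarith) (by linarith)) (by positivity)

lemma inv_sq_mul_betaIntegrand_inv (s : ℝ) {x : ℝ} (hx : 1 < x) :
    (x ^ 2)⁻¹ * betaIntegrand s x⁻¹ = x ^ (s - 1) * (x - 1) ^ (-(2 * s)) := by
  have hx0 : 0 < x := by linarith
  have hsub : 1 - x⁻¹ = (x - 1) * x⁻¹ := by field_simp
  have hexp : (x ^ 2)⁻¹ * x⁻¹ ^ (s - 1) * x⁻¹ ^ (-(2 * s)) = x ^ (s - 1) := by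
    rw [Real.inv_rpow hx0.le, Real.inv_rpow hx0.le, ← Real.rpow_natCast, ← Real.rpow_neg hx0.le,
      ← Real.rpow_neg hx0.le, ← Real.rpow_neg hx0.le, ← Real.rpow_add hx0, ← Real.rpow_add hx0]
    congr 1
    push_cast
    ring
  rw [betaIntegrand, hsub, Real.mul_rpow (by linarith) (by positivity), ← hexp]
  ring

lemma setIntegral_Ioi_eq_setIntegral_Ioo_inv (s : ℝ) {c : ℝ} (hc : 1 ≤ c) :
    ∫ t in Ioi c, t ^ (s - 1) * (t - 1) ^ (-(2 * s)) = ∫ t in Ioo 0 c⁻¹, betaIntegrand s t := by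
  have himage : Inv.inv '' Ioi c = Ioo (0 : ℝ) c⁻¹ := by
    rw [image_inv_eq_inv, inv_Ioi₀ (by linarith)]
  rw [← himage, integral_image_eq_integral_abs_deriv_smul measurableSet_Ioi
    (fun x hx => (hasDerivAt_inv (by linarith [mem_Ioi.1 hx])).hasDerivWithinAt)
    inv_injective.injOn]
  refine setIntegral_congr_fun measurableSet_Ioi fun x hx => ?_
  have hx1 : 1 < x := hc.trans_lt hx
  rw [smul_eq_mul, abs_neg, abs_of_pos (by positivity), inv_sq_mul_betaIntegrand_inv s hx1]

lemma pv_eq_setIntegral_Ico_betaIntegrand {s ε : ℝ} (hs : 0 < s) (hε : 0 < ε) (hε1 : ε < 1) :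
    -(∫ t in Ioo (0 : ℝ) (1 - ε), t ^ (s - 1) * (1 - t) ^ (-(2 * s))) +
        ∫ t in Ioi (1 + ε), t ^ (s - 1) * (t - 1) ^ (-(2 * s)) =
      ∫ t in Ico (1 - ε) (1 + ε)⁻¹, betaIntegrand s t := by
  have hlt : 1 - ε < (1 + ε)⁻¹ := by
    rw [lt_inv_comm₀ (by linarith) (by linarith), inv_eq_one_div, lt_div_iff₀ (by linarith)]
    nlinarith
  have hint : IntegrableOn (betaIntegrand s) (Ioo 0 (1 + ε)⁻¹) :=
    integrableOn_betaIntegrand_Ioo hs (inv_lt_one_of_one_lt₀ (by linarith))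
  rw [setIntegral_Ioi_eq_setIntegral_Ioo_inv s (by linarith),
    ← Ioo_union_Ico_eq_Ioo (by linarith) hlt.le,
    setIntegral_union (Ico_disjoint_Ico_same.mono_left Ioo_subset_Ico_self) measurableSet_Ico
      (hint.mono_set (Ioo_subset_Ioo_right hlt.le))
      (hint.mono_set (Ico_subset_Ioo_left (by linarith)))]
  simp only [betaIntegrand]
  ring

lemma norm_betaIntegrand_le {s t δ : ℝ} (hs0 : 0 ≤ s) (hs1 : s ≤ 1) (ht : 1 / 2 ≤ t) (hδ : 0 < δ)
    (htδ : δ ≤ 1 - t) : ‖betaIntegrand s t‖ ≤ (1 / 2) ^ (s - 1) * δ ^ (-(2 * s)) := by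
  have h1t : 0 < 1 - t := hδ.trans_le htδ
  rw [betaIntegrand, Real.norm_of_nonneg (by positivity)]
  exact mul_le_mul (Real.rpow_le_rpow_of_nonpos (by norm_num) ht (by linarith))
    (Real.rpow_le_rpow_of_nonpos hδ htδ (by linarith)) (by positivity) (by positivity)

lemma norm_setIntegral_Ico_betaIntegrand_le {s ε : ℝ} (hs0 : 0 ≤ s) (hs1 : s ≤ 1) (hε : 0 < ε)
    (hε1 : ε ≤ 1 / 2) :
    ‖∫ t in Ico (1 - ε) (1 + ε)⁻¹, betaIntegrand s t‖ ≤
      (1 / 2) ^ (s - 1) * 2 ^ (2 * s) * ε ^ (2 - 2 * s) := by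
  have hgap : ε / 2 ≤ 1 - (1 + ε)⁻¹ := by
    rw [show 1 - (1 + ε)⁻¹ = ε / (1 + ε) by field_simp; ring]
    exact div_le_div_of_nonneg_left hε.le (by linarith) (by linarith)
  have hlen : volume.real (Ico (1 - ε) (1 + ε)⁻¹) ≤ ε ^ 2 := by
    rw [Real.volume_real_Ico]
    refine max_le ?_ (by positivity)
    have : (1 + ε)⁻¹ ≤ 1 - ε + ε ^ 2 := by
      rw [inv_le_iff_one_le_mul₀ (by linarith)]
      nlinarith [pow_pos hε 3]
    linarith
  calc _ ≤ (1 / 2) ^ (s - 1) * (ε / 2) ^ (-(2 * s)) * volume.real (Ico (1 - ε) (1 + ε)⁻¹) :=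
        norm_setIntegral_le_of_norm_le_const measure_Ico_lt_top fun t ht =>
          norm_betaIntegrand_le hs0 hs1 (by linarith [ht.1]) (by positivity) (by linarith [ht.2])
    _ ≤ (1 / 2) ^ (s - 1) * (ε / 2) ^ (-(2 * s)) * ε ^ 2 := by gcongr
    _ = _ := by
      rw [Real.div_rpow hε.le (by norm_num), Real.rpow_neg (by norm_num : (0 : ℝ) ≤ 2),
        show 2 - 2 * s = -(2 * s) + 2 by ring, Real.rpow_add hε, Real.rpow_two]
      field_simp

/-- For `s ∈ (0,1)`, the principal value
`PV ∫_{-∞}^{∞} (1+r)_+^{s-1} r / |r|^{1+2s} dr = 0`, expressed equivalently (after the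
substitution `t = 1 + r`) as
`lim_{ε→0⁺} [ -∫_0^{1-ε} t^{s-1}(1-t)^{-2s} dt + ∫_{1+ε}^∞ t^{s-1}(t-1)^{-2s} dt ] = 0`. -/
theorem stmt1 (s : ℝ) (hs0 : 0 < s) (hs1 : s < 1) :
    Tendsto
      (fun ε : ℝ =>
        -(∫ t in Ioo (0 : ℝ) (1 - ε), t ^ (s - 1) * (1 - t) ^ (-(2 * s))) +
          ∫ t in Ioi (1 + ε), t ^ (s - 1) * (t - 1) ^ (-(2 * s)))
      (nhdsWithin 0 (Ioi 0)) (nhds 0) := by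
  refine Asymptotics.IsBigO.trans_tendsto (g'' := fun ε : ℝ => ε ^ (2 - 2 * s)) ?_ ?_
  · refine .of_bound ((1 / 2) ^ (s - 1) * 2 ^ (2 * s)) ?_
    filter_upwards [Ioo_mem_nhdsGT (by norm_num : (0 : ℝ) < 1 / 2)] with ε ⟨hε, hε1⟩
    rw [pv_eq_setIntegral_Ico_betaIntegrand hs0 hε (by linarith),
      Real.norm_of_nonneg (Real.rpow_nonneg hε.le _)]
    exact norm_setIntegral_Ico_betaIntegrand_le hs0.le hs1.le hε hε1.le
  · have hcont := (Real.continuousAt_rpow_const 0 (2 - 2 * s) (Or.inr (by linarith))).tendsto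
    rw [Real.zero_rpow (by linarith)] at hcont
    exact hcont.mono_left nhdsWithin_le_nhds
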